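/- Let T be a finite binary tree in which every internal node has exactly two children, and let x assign to every node of T a value in {0, 1, ⊥} such that for every internal node u with children v, w the PURIFY constraint holds on input x(u) with outputs (x(v), x(w)). Then: (1) at most one leaf of T has value ⊥ (equivalently, all leaves except possibly one have pure values); and (2) if the root has a pure value b ∈ {0, 1}, then every leaf has value b. -/

import Mathlib

/-- Values of Pure-Circuit nodes: 0, 1, or the garbage value ⊥. -/
inductive PCVal : Type
  | zero
  | one
  | bot
deriving DecidableEq

/-- A value is pure if it is 0 or 1. -/
def PCVal.pure (v : PCVal) : Prop := v = .zero ∨ v = .one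

/-- The PURIFY constraint on input `a` and outputs `b, c`. -/
def purifyOk (a b c : PCVal) : Prop :=
  (b.pure ∨ c.pure) ∧ (a.pure → b = a ∧ c = a)

/-- A finite binary tree in which every internal node has exactly two children,
with a value in `{0, 1, ⊥}` at every node. -/
inductive PTree : Type
  | leaf (v : PCVal)
  | node (v : PCVal) (l r : PTree)

/-- The value at the root of the tree. -/
def PTree.rootVal : PTree → PCVal
  | .leaf v => v
  | .node v _ _ => v

/-- The PURIFY constraint holds at every internal node: the input is the node's
value and the outputs are the values of its two children. -/
def PTree.ok : PTree → Prop
  | .leaf _ => True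
  | .node v l r => purifyOk v l.rootVal r.rootVal ∧ l.ok ∧ r.ok

/-- The list of values at the leaves of the tree. -/
def PTree.leaves : PTree → List PCVal
  | .leaf v => [v]
  | .node _ l r => l.leaves ++ r.leaves

theorem PCVal.pure.ne_bot {v : PCVal} (hv : v.pure) : v ≠ .bot := by
  rcases hv with rfl | rfl <;> decide

namespace PTree

theorem eq_rootVal_of_mem_leaves {t : PTree} (h : t.ok) (hroot : t.rootVal.pure) :
    ∀ v ∈ t.leaves, v = t.rootVal := by
  induction t with
  | leaf w => simp [leaves, rootVal]
  | node w l r ihl ihr =>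
    obtain ⟨⟨-, hpure⟩, hl, hr⟩ := h
    obtain ⟨hlw, hrw⟩ := hpure hroot
    intro v hv
    rcases List.mem_append.mp hv with hv | hv
    · exact (ihl hl (hlw ▸ hroot) v hv).trans hlw
    · exact (ihr hr (hrw ▸ hroot) v hv).trans hrw

theorem count_bot_leaves_eq_zero {t : PTree} (h : t.ok) (hroot : t.rootVal.pure) :
    t.leaves.count .bot = 0 :=
  List.count_eq_zero.mpr fun hbot => hroot.ne_bot (eq_rootVal_of_mem_leaves h hroot _ hbot).symm

-- The pure child's subtree has no ⊥ leaf, so every ⊥ leaf lies below the other child.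
theorem count_bot_leaves_le_one {t : PTree} (h : t.ok) : t.leaves.count .bot ≤ 1 := by
  induction t with
  | leaf w => cases w <;> simp [leaves]
  | node w l r ihl ihr =>
    obtain ⟨⟨hchild, -⟩, hl, hr⟩ := h
    rw [leaves, List.count_append]
    rcases hchild with hlpure | hrpure
    · rw [count_bot_leaves_eq_zero hl hlpure, zero_add]; exact ihr hr
    · rw [count_bot_leaves_eq_zero hr hrpure, add_zero]; exact ihl hl

end PTree

/-- In a binary tree of PURIFY gates: (1) at most one leaf has value ⊥, and
(2) if the root has a pure value `b`, then every leaf has value `b`. -/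
theorem purify_tree (t : PTree) (h : t.ok) :
    t.leaves.count PCVal.bot ≤ 1 ∧
    (∀ b : PCVal, b.pure → t.rootVal = b → ∀ v ∈ t.leaves, v = b) := by
  refine ⟨PTree.count_bot_leaves_le_one h, ?_⟩
  rintro b hb rfl
  exact PTree.eq_rootVal_of_mem_leaves h hb
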